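/- arXiv:1309.7627 — 5 statements merged into one kernel-verified Lean document; each statement's English description precedes it below -/
import Mathlib

section
/- For |λ| = 1, a sequence y ∈ ℓ²(ℕ) of the form yₙ = λⁿ⁺¹ wₙ lies in the range of S* − λI only if Σₙ wₙ converges; consequently, for the sequences w with wₙ = 2^{-k} at positions forming sufficiently sparse gaps (e.g. w has entry 1/2ᵏ at position 2^{2ᵏ} and zeros elsewhere), the corresponding y is not in the range of S* − λI. -/
noncomputable abbrev H2 := lp (fun _ : ℕ => ℂ) 2

open Classical in
/-- The sparse sequence with entry 1/2ᵏ at position 2^(2ᵏ) and zeros elsewhere. -/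
noncomputable def sparseW (n : ℕ) : ℂ :=
  if h : ∃ k : ℕ, n = 2 ^ (2 ^ k) then (1 / 2 : ℂ) ^ Nat.find h else 0

/-!
If `(S* - λ) x = y` with `yₙ = λⁿ⁺¹ wₙ`, then `xₙ₊₁ = λ xₙ + λⁿ⁺¹ wₙ`, so
`x_N = λ^N (x₀ + ∑_{n<N} wₙ)` and `|x_N| = |x₀ + ∑_{n<N} wₙ|`. Since `x_N → 0`, the partial sums
of `w` converge to `-x₀`, and when `w` is summable `|x_N|` is the modulus of the tail `∑_{n≥N} wₙ`.
For the sparse sequence the tail stays above `2⁻ᵏ` for all `N ≤ 2^(2ᵏ)`, so `∑ |x_N|²` would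
be at least `2^(2ᵏ) / 4ᵏ` for every `k`, which is unbounded in `k`.
-/

open Filter Topology ENNReal

theorem lp.tendsto_apply_atTop_zero {E : Type*} [NormedAddCommGroup E] {p : ℝ≥0∞}
    (hp : 0 < p.toReal) (x : lp (fun _ : ℕ => E) p) : Tendsto (⇑x) atTop (𝓝 0) := by
  have h := (((lp.memℓp x).summable hp).tendsto_atTop_zero).rpow_const (p := p.toReal⁻¹)
    (Or.inr (inv_nonneg.2 hp.le))
  rw [Real.zero_rpow (inv_ne_zero hp.ne')] at h
  refine tendsto_zero_iff_norm_tendsto_zero.2 (h.congr fun n => ?_)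
  exact Real.rpow_rpow_inv (norm_nonneg _) hp.ne'

section Recurrence

variable {𝕜 : Type*} [NormedField 𝕜] {l : 𝕜} {x w : ℕ → 𝕜}

theorem eq_pow_mul_add_sum_range_of_succ (hrec : ∀ n, x (n + 1) = l * x n + l ^ (n + 1) * w n)
    (N : ℕ) : x N = l ^ N * (x 0 + ∑ n ∈ Finset.range N, w n) := by
  induction N with
  | zero => simp
  | succ N ih => rw [hrec, ih, Finset.sum_range_succ]; ring

theorem norm_eq_norm_add_sum_range_of_succ (hl : ‖l‖ = 1)
    (hrec : ∀ n, x (n + 1) = l * x n + l ^ (n + 1) * w n) (N : ℕ) :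
    ‖x N‖ = ‖x 0 + ∑ n ∈ Finset.range N, w n‖ := by
  rw [eq_pow_mul_add_sum_range_of_succ hrec, norm_mul, norm_pow, hl, one_pow, one_mul]

theorem tendsto_sum_range_of_succ (hl : ‖l‖ = 1)
    (hrec : ∀ n, x (n + 1) = l * x n + l ^ (n + 1) * w n) (hx : Tendsto x atTop (𝓝 0)) :
    Tendsto (fun N => ∑ n ∈ Finset.range N, w n) atTop (𝓝 (-x 0)) := by
  have h : Tendsto (fun N => x 0 + ∑ n ∈ Finset.range N, w n) atTop (𝓝 0) := by
    rw [tendsto_zero_iff_norm_tendsto_zero] at hx ⊢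
    simpa only [norm_eq_norm_add_sum_range_of_succ hl hrec] using hx
  simpa using h.sub_const (x 0)

theorem norm_eq_norm_tsum_nat_add_of_succ (hl : ‖l‖ = 1)
    (hrec : ∀ n, x (n + 1) = l * x n + l ^ (n + 1) * w n) (hx : Tendsto x atTop (𝓝 0))
    (hw : Summable w) (N : ℕ) : ‖x N‖ = ‖∑' n, w (n + N)‖ := by
  have hx0 : x 0 = -∑' n, w n :=
    neg_eq_iff_eq_neg.1 (tendsto_nhds_unique (tendsto_sum_range_of_succ hl hrec hx)
      hw.hasSum.tendsto_sum_nat)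
  rw [norm_eq_norm_add_sum_range_of_succ hl hrec, hx0, ← hw.sum_add_tsum_nat_add N, ← norm_neg]
  congr 1
  ring

end Recurrence

theorem two_pow_two_pow_injective : Function.Injective fun k : ℕ => 2 ^ 2 ^ k :=
  (Nat.pow_right_injective le_rfl).comp (Nat.pow_right_injective le_rfl)

theorem sparseW_two_pow_two_pow (k : ℕ) : sparseW (2 ^ 2 ^ k) = (((1 / 2 : ℝ) ^ k : ℝ) : ℂ) := by
  have h : ∃ j : ℕ, 2 ^ 2 ^ k = 2 ^ 2 ^ j := ⟨k, rfl⟩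
  rw [sparseW, dif_pos h, two_pow_two_pow_injective (Nat.find_spec h).symm]
  push_cast
  rfl

theorem sparseW_eq_zero {n : ℕ} (hn : n ∉ Set.range fun k : ℕ => 2 ^ 2 ^ k) : sparseW n = 0 :=
  dif_neg fun ⟨k, hk⟩ => hn ⟨k, hk.symm⟩

theorem re_sparseW_nonneg (n : ℕ) : 0 ≤ (sparseW n).re := by
  by_cases hn : n ∈ Set.range fun k : ℕ => 2 ^ 2 ^ k
  · obtain ⟨k, rfl⟩ := hn
    rw [sparseW_two_pow_two_pow, Complex.ofReal_re]
    positivity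
  · simp [sparseW_eq_zero hn]

theorem summable_norm_sparseW : Summable fun n => ‖sparseW n‖ := by
  rw [← two_pow_two_pow_injective.summable_iff fun n hn => by simp [sparseW_eq_zero hn]]
  simpa [Function.comp_def, sparseW_two_pow_two_pow] using
    summable_geometric_of_lt_one (by norm_num : (0 : ℝ) ≤ 1 / 2) (by norm_num)

theorem memℓp_sparseW : Memℓp sparseW 2 :=
  (memℓp_gen (p := 1) (by simpa using summable_norm_sparseW)).of_exponent_ge one_le_two

theorem half_pow_le_norm_tsum_sparseW_nat_add {k N : ℕ} (hN : N ≤ 2 ^ 2 ^ k) :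
    (1 / 2 : ℝ) ^ k ≤ ‖∑' n, sparseW (n + N)‖ := by
  have hs : Summable fun n => sparseW (n + N) :=
    (summable_nat_add_iff N).2 summable_norm_sparseW.of_norm
  calc (1 / 2 : ℝ) ^ k = (sparseW (2 ^ 2 ^ k - N + N)).re := by
        rw [Nat.sub_add_cancel hN, sparseW_two_pow_two_pow, Complex.ofReal_re]
    _ ≤ ∑' n, (sparseW (n + N)).re :=
        (Complex.hasSum_re hs.hasSum).summable.le_tsum _ fun n _ => re_sparseW_nonneg _
    _ = (∑' n, sparseW (n + N)).re := (Complex.re_tsum hs).symm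
    _ ≤ ‖∑' n, sparseW (n + N)‖ := Complex.re_le_norm _

theorem tendsto_two_pow_two_pow_div_sq_two_pow :
    Tendsto (fun k : ℕ => (2 : ℝ) ^ 2 ^ k / (2 ^ k) ^ 2) atTop atTop := by
  have h := (tendsto_pow_const_div_const_pow_of_one_lt 2 one_lt_two).comp
    (tendsto_pow_atTop_atTop_of_one_lt (one_lt_two : 1 < (2 : ℕ)))
  have hpos : ∀ k : ℕ, 0 < ((2 ^ k : ℕ) : ℝ) ^ 2 / 2 ^ 2 ^ k := fun k => by positivity
  refine (tendsto_nhdsWithin_iff.2 ⟨h, .of_forall hpos⟩).inv_tendsto_nhdsGT_zero.congr fun k => ?_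
  simp only [Function.comp_apply, Pi.inv_apply, inv_div]
  push_cast
  rfl

theorem not_summable_sq_norm_tsum_sparseW_nat_add :
    ¬ Summable fun N => ‖∑' n, sparseW (n + N)‖ ^ 2 := by
  intro h
  obtain ⟨k, hk⟩ := (tendsto_two_pow_two_pow_div_sq_two_pow.eventually_gt_atTop
    (∑' N, ‖∑' n, sparseW (n + N)‖ ^ 2)).exists
  refine hk.not_ge ?_
  calc (2 : ℝ) ^ 2 ^ k / (2 ^ k) ^ 2 = ∑ _N ∈ Finset.range (2 ^ 2 ^ k), ((1 / 2 : ℝ) ^ k) ^ 2 := by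
        rw [Finset.sum_const, Finset.card_range, nsmul_eq_mul, one_div_pow, div_pow, one_pow,
          mul_one_div]
        push_cast
        rfl
    _ ≤ ∑ N ∈ Finset.range (2 ^ 2 ^ k), ‖∑' n, sparseW (n + N)‖ ^ 2 :=
        Finset.sum_le_sum fun N hN => pow_le_pow_left₀ (by positivity)
          (half_pow_le_norm_tsum_sparseW_nat_add (Finset.mem_range.1 hN).le) 2
    _ ≤ _ := h.sum_le_tsum _ fun N _ => by positivity

theorem sub_smul_one_apply {S : H2 →L[ℂ] H2} (hS : ∀ (x : H2) (n : ℕ), S x n = x (n + 1))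
    (l : ℂ) (x : H2) (n : ℕ) : (S - l • (1 : H2 →L[ℂ] H2)) x n = x (n + 1) - l * x n := by
  simp only [sub_apply, smul_apply, one_apply_eq_self, lp.coeFn_sub, Pi.sub_apply,
    lp.coeFn_smul, Pi.smul_apply, smul_eq_mul, hS]

/-- For |λ| = 1, a sequence y ∈ ℓ²(ℕ) of the form yₙ = λⁿ⁺¹wₙ lies in the range of
S* − λI only if Σₙ wₙ converges; and for the sparse sequence `sparseW` the
corresponding y ∈ ℓ²(ℕ) is not in the range of S* − λI. -/
theorem range_backward_shift_sub (l : ℂ) (hl : ‖l‖ = 1)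
    (S : H2 →L[ℂ] H2) (hS : ∀ (x : H2) (n : ℕ), S x n = x (n + 1)) :
    (∀ (w : ℕ → ℂ) (y : H2), (∀ n : ℕ, y n = l ^ (n + 1) * w n) →
      y ∈ Set.range ⇑(S - l • (1 : H2 →L[ℂ] H2)) →
      ∃ s : ℂ, Filter.Tendsto (fun N : ℕ => ∑ n ∈ Finset.range N, w n)
        Filter.atTop (nhds s)) ∧
    (∃ y : H2, (∀ n : ℕ, y n = l ^ (n + 1) * sparseW n) ∧
      y ∉ Set.range ⇑(S - l • (1 : H2 →L[ℂ] H2))) := by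
  have hrec {w : ℕ → ℂ} {x y : H2} (hy : ∀ n, y n = l ^ (n + 1) * w n)
      (hx : (S - l • (1 : H2 →L[ℂ] H2)) x = y) (n : ℕ) :
      x (n + 1) = l * x n + l ^ (n + 1) * w n := by
    rw [← hy, ← hx, sub_smul_one_apply hS]
    ring
  have hx0 (x : H2) : Tendsto (⇑x) atTop (𝓝 0) := lp.tendsto_apply_atTop_zero (by simp) x
  refine ⟨fun w y hy ⟨x, hx⟩ => ⟨_, tendsto_sum_range_of_succ hl (hrec hy hx) (hx0 x)⟩, ?_⟩
  have hmem : Memℓp (fun n => l ^ (n + 1) * sparseW n) 2 :=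
    memℓp_sparseW.mono' fun n => by simp [hl]
  refine ⟨⟨_, hmem⟩, fun _ => rfl, fun ⟨x, hx⟩ => not_summable_sq_norm_tsum_sparseW_nat_add ?_⟩
  have hnorm := norm_eq_norm_tsum_nat_add_of_succ hl (hrec (fun _ => rfl) hx) (hx0 x)
    summable_norm_sparseW.of_norm
  simpa [hnorm] using (lp.memℓp x).summable (p := 2) (by simp)
end

section
/- Let φ be a function continuous on the closed unit disc and analytic on the open disc (φ in the disc algebra). If φ(λ) = μ for some λ, μ on the unit circle, then μ belongs to the essential spectrum of the operator φ(S*) on ℓ²(ℕ). -/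
def IsFredholm (T : H2 →L[ℂ] H2) : Prop :=
  FiniteDimensional ℂ (LinearMap.ker (T : H2 →ₗ[ℂ] H2)) ∧
  IsClosed (LinearMap.range (T : H2 →ₗ[ℂ] H2) : Set H2) ∧
  FiniteDimensional ℂ (H2 ⧸ LinearMap.range (T : H2 →ₗ[ℂ] H2))


/-! For `‖λ‖ < 1` the vector `k_λ = √(1 - ‖λ‖²) (λⁿ)ₙ` is a unit eigenvector of `S*` with
eigenvalue `λ`, hence of `φ(S*)` with eigenvalue `φ(λ)`. Letting `λ → l` inside the disc gives
unit vectors with `(φ(S*) - μ) k_λ → 0` whose coordinates all tend to `0`. An operator with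
finite-dimensional kernel and closed range is bounded below on a closed complement of its
kernel, so such a sequence would have a norm-convergent subsequence; its limit would be a unit
vector with all coordinates `0`. -/

open Filter Topology
open scoped ENNReal

namespace ContinuousLinearMap

section Polynomial

variable {𝕜 E : Type*} [NontriviallyNormedField 𝕜] [NormedAddCommGroup E] [NormedSpace 𝕜 E]

theorem aeval_apply_of_apply_eq_smul {S : E →L[𝕜] E} {c : 𝕜} {x : E} (hx : S x = c • x)
    (p : Polynomial 𝕜) : Polynomial.aeval S p x = p.eval c • x := by
  have hcoe : Polynomial.aeval S p x = Polynomial.aeval (S : E →ₗ[𝕜] E) p x := by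
    induction p using Polynomial.induction_on' with
    | add p q hp hq => simp [hp, hq]
    | monomial n a =>
      simp [Polynomial.aeval_monomial, Module.algebraMap_end_apply, Module.End.pow_apply]
  exact hcoe.trans (Module.End.aeval_apply_of_mem_apply_eq_smul hx)

theorem apply_eq_smul_of_tendsto_aeval {S A : E →L[𝕜] E} {P : ℕ → Polynomial 𝕜} {c d : 𝕜}
    {x : E} (hA : Tendsto (fun n => Polynomial.aeval S (P n)) atTop (𝓝 A)) (hx : S x = c • x)
    (hP : Tendsto (fun n => (P n).eval c) atTop (𝓝 d)) : A x = d • x := by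
  have hAx : Tendsto (fun n => Polynomial.aeval S (P n) x) atTop (𝓝 (A x)) :=
    ((apply 𝕜 E x).continuous.tendsto A).comp hA
  simp only [aeval_apply_of_apply_eq_smul hx] at hAx
  exact tendsto_nhds_unique hAx (hP.smul_const x)

end Polynomial

section FiniteDimensionalKer

variable {𝕜 E F : Type*} [RCLike 𝕜]
  [NormedAddCommGroup E] [NormedSpace 𝕜 E] [CompleteSpace E]
  [NormedAddCommGroup F] [NormedSpace 𝕜 F] [CompleteSpace F]

theorem exists_norm_sub_le_of_finiteDimensional_ker (T : E →L[𝕜] F)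
    [FiniteDimensional 𝕜 (LinearMap.ker (T : E →ₗ[𝕜] F))]
    (hT : IsClosed (LinearMap.range (T : E →ₗ[𝕜] F) : Set F)) :
    ∃ (π : E →L[𝕜] LinearMap.ker (T : E →ₗ[𝕜] F)) (C : ℝ), ∀ x, ‖x - π x‖ ≤ C * ‖T x‖ := by
  obtain ⟨π, hπ⟩ :=
    Submodule.ClosedComplemented.of_finiteDimensional (LinearMap.ker (T : E →ₗ[𝕜] F))
  set M := LinearMap.ker (π : E →ₗ[𝕜] LinearMap.ker (T : E →ₗ[𝕜] F))
  have hM : ∀ x, x - π x ∈ M := fun x => by simp [M, hπ]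
  have hTM : ∀ x, T (x - π x) = T x := fun x => by simp
  have hinj : Function.Injective (T ∘L M.subtypeL) := by
    refine (injective_iff_map_eq_zero _).mpr fun m hm => ?_
    have hmK : (m : E) ∈ LinearMap.ker (T : E →ₗ[𝕜] F) := hm
    have hπm : π m = 0 := m.2
    exact Subtype.ext (by simpa [hπm] using (congrArg Subtype.val (hπ ⟨m, hmK⟩)).symm)
  have hrange : Set.range (T ∘L M.subtypeL) = Set.range T := by
    refine subset_antisymm (fun _ ⟨m, hm⟩ => ⟨m, hm⟩) ?_
    rintro _ ⟨x, rfl⟩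
    exact ⟨⟨x - π x, hM x⟩, hTM x⟩
  have : CompleteSpace M := (π.isClosed_ker).completeSpace_coe
  obtain ⟨C, hC⟩ := (T ∘L M.subtypeL).antilipschitz_of_injective_of_isClosed_range hinj
    (by rwa [hrange, ← coe_coe, ← LinearMap.coe_range])
  refine ⟨π, C, fun x => ?_⟩
  simpa [hTM] using hC.le_mul_dist ⟨x - π x, hM x⟩ 0

theorem exists_subseq_tendsto_of_tendsto_apply_zero (T : E →L[𝕜] F)
    [FiniteDimensional 𝕜 (LinearMap.ker (T : E →ₗ[𝕜] F))]
    (hT : IsClosed (LinearMap.range (T : E →ₗ[𝕜] F) : Set F)) {x : ℕ → E} {B : ℝ}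
    (hB : ∀ k, ‖x k‖ ≤ B) (hTx : Tendsto (fun k => T (x k)) atTop (𝓝 0)) :
    ∃ a, ∃ σ : ℕ → ℕ, StrictMono σ ∧ Tendsto (fun k => x (σ k)) atTop (𝓝 a) := by
  obtain ⟨π, C, hC⟩ := T.exists_norm_sub_le_of_finiteDimensional_ker hT
  have hπx : ∀ k, π (x k) ∈ Metric.closedBall 0 (‖π‖ * B) := fun k => by
    simpa using π.le_opNorm_of_le (hB k)
  obtain ⟨a, -, σ, hσ, ha⟩ := tendsto_subseq_of_bounded Metric.isBounded_closedBall hπx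
  have hsmall : Tendsto (fun k => x k - π (x k)) atTop (𝓝 0) :=
    squeeze_zero_norm (fun k => hC (x k)) (by simpa using hTx.norm.const_mul C)
  refine ⟨a, σ, hσ, ?_⟩
  simpa using ((continuous_subtype_val.tendsto a).comp ha).add (hsmall.comp hσ.tendsto_atTop)

end FiniteDimensionalKer

end ContinuousLinearMap

theorem not_isFredholm_of_tendsto_apply_zero (T : H2 →L[ℂ] H2) {x : ℕ → H2}
    (hx : ∀ k, ‖x k‖ = 1) (hTx : Tendsto (fun k => T (x k)) atTop (𝓝 0))
    (hcoord : ∀ n, Tendsto (fun k => x k n) atTop (𝓝 0)) : ¬ IsFredholm T := by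
  rintro ⟨hker, hrange, -⟩
  obtain ⟨a, σ, hσ, ha⟩ :=
    T.exists_subseq_tendsto_of_tendsto_apply_zero hrange (fun k => (hx k).le) hTx
  have ha0 : a = 0 := lp.ext <| funext fun n =>
    tendsto_nhds_unique (((continuous_apply n).tendsto _).comp
      ((lp.uniformContinuous_coe.continuous.tendsto a).comp ha)) ((hcoord n).comp hσ.tendsto_atTop)
  simpa [hx, ha0] using ha.norm

theorem memℓp_geometric {𝕜 : Type*} [NormedDivisionRing 𝕜] {l : 𝕜} (hl : ‖l‖ < 1) :
    Memℓp (fun n : ℕ => l ^ n) 2 := by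
  refine memℓp_gen ?_
  simp_rw [ENNReal.toReal_ofNat, Real.rpow_two, norm_pow, pow_right_comm _ _ 2]
  exact summable_geometric_of_lt_one (by positivity) (pow_lt_one₀ (norm_nonneg l) hl two_ne_zero)

noncomputable def normalizedGeometricVec (l : ℂ) (hl : ‖l‖ < 1) : H2 :=
  ⟨fun n => (√(1 - ‖l‖ ^ 2) : ℂ) * l ^ n, (memℓp_geometric hl).const_mul _⟩

section normalizedGeometricVec

variable {l : ℂ} (hl : ‖l‖ < 1)

theorem normalizedGeometricVec_apply (n : ℕ) :
    normalizedGeometricVec l hl n = (√(1 - ‖l‖ ^ 2) : ℂ) * l ^ n := rfl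

theorem norm_normalizedGeometricVec : ‖normalizedGeometricVec l hl‖ = 1 := by
  have hr : ‖l‖ ^ 2 < 1 := pow_lt_one₀ (norm_nonneg l) hl two_ne_zero
  have hterm : ∀ n, ‖normalizedGeometricVec l hl n‖ ^ (2 : ℝ≥0∞).toReal
      = (1 - ‖l‖ ^ 2) * (‖l‖ ^ 2) ^ n := fun n => by
    rw [ENNReal.toReal_ofNat, Real.rpow_two, normalizedGeometricVec_apply, norm_mul, mul_pow,
      Complex.norm_real, Real.norm_of_nonneg (Real.sqrt_nonneg _),
      Real.sq_sqrt (sub_pos.mpr hr).le, norm_pow, pow_right_comm]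
  have hsum := (hasSum_geometric_of_lt_one (by positivity) hr).mul_left (1 - ‖l‖ ^ 2)
  rw [mul_inv_cancel₀ (sub_pos.mpr hr).ne', ← funext hterm] at hsum
  have h := (lp.hasSum_norm (by norm_num) _).unique hsum
  rw [ENNReal.toReal_ofNat, Real.rpow_two] at h
  exact (pow_eq_one_iff_of_nonneg (norm_nonneg _) two_ne_zero).mp h

theorem norm_normalizedGeometricVec_apply_le (n : ℕ) :
    ‖normalizedGeometricVec l hl n‖ ≤ √(1 - ‖l‖ ^ 2) := by
  rw [normalizedGeometricVec_apply, norm_mul, Complex.norm_real,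
    Real.norm_of_nonneg (Real.sqrt_nonneg _), norm_pow]
  exact mul_le_of_le_one_right (Real.sqrt_nonneg _) (pow_le_one₀ (norm_nonneg l) hl.le)

theorem apply_normalizedGeometricVec_of_shift {S : H2 →L[ℂ] H2}
    (hS : ∀ (x : H2) (n : ℕ), S x n = x (n + 1)) :
    S (normalizedGeometricVec l hl) = l • normalizedGeometricVec l hl := by
  ext n
  simp [hS, normalizedGeometricVec_apply, pow_succ]
  ring

end normalizedGeometricVec

theorem tendsto_normalizedGeometricVec_apply_zero {lam : ℕ → ℂ} (hlam : ∀ k, ‖lam k‖ < 1)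
    (hlam_norm : Tendsto (fun k => ‖lam k‖) atTop (𝓝 1)) (n : ℕ) :
    Tendsto (fun k => normalizedGeometricVec (lam k) (hlam k) n) atTop (𝓝 0) :=
  squeeze_zero_norm (fun k => norm_normalizedGeometricVec_apply_le (hlam k) n)
    (by simpa using ((hlam_norm.pow 2).const_sub 1).sqrt)

theorem circle_value_in_essential_spectrum_general (φ : ℂ → ℂ)
    (hφc : ContinuousOn φ (Metric.closedBall (0 : ℂ) 1))
    (S : H2 →L[ℂ] H2) (hS : ∀ (x : H2) (n : ℕ), S x n = x (n + 1))
    (P : ℕ → Polynomial ℂ)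
    (hP : TendstoUniformlyOn (fun n z => (P n).eval z) φ Filter.atTop
      (Metric.closedBall (0 : ℂ) 1))
    (A : H2 →L[ℂ] H2)
    (hA : Filter.Tendsto (fun n => Polynomial.aeval S (P n)) Filter.atTop (nhds A))
    (l μ : ℂ) (hl : ‖l‖ = 1) (hlμ : φ l = μ) :
    ¬ IsFredholm (A - μ • 1) := by
  obtain ⟨lam, hlam_ball, hlam⟩ : ∃ lam : ℕ → ℂ, (∀ k, lam k ∈ Metric.ball 0 1) ∧
      Tendsto lam atTop (𝓝 l) :=
    mem_closure_iff_seq_limit.mp (by simp [closure_ball, hl])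
  have hlam_lt : ∀ k, ‖lam k‖ < 1 := by simpa using hlam_ball
  have hlam_disc : ∀ k, lam k ∈ Metric.closedBall 0 1 :=
    fun k => Metric.ball_subset_closedBall (hlam_ball k)
  set x := fun k => normalizedGeometricVec (lam k) (hlam_lt k)
  have hAx : ∀ k, A (x k) = φ (lam k) • x k := fun k =>
    ContinuousLinearMap.apply_eq_smul_of_tendsto_aeval hA
      (apply_normalizedGeometricVec_of_shift _ hS) (hP.tendsto_at (hlam_disc k))
  have hφ : Tendsto (fun k => φ (lam k)) atTop (𝓝 μ) :=
    hlμ ▸ (hφc l (by simp [hl])).tendsto.comp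
      (tendsto_nhdsWithin_iff.mpr ⟨hlam, .of_forall hlam_disc⟩)
  refine not_isFredholm_of_tendsto_apply_zero (x := x) _ (fun k => norm_normalizedGeometricVec _)
    ?_ (tendsto_normalizedGeometricVec_apply_zero hlam_lt (by simpa [hl] using hlam.norm))
  have hTx : Tendsto (fun k => (φ (lam k) - μ) • x k) atTop (𝓝 0) := by
    refine squeeze_zero_norm (fun k => ?_) (by simpa using (hφ.sub_const μ).norm)
    simp [x, norm_smul, norm_normalizedGeometricVec]
  exact hTx.congr fun k => by simp [hAx, sub_smul]

/-- Let φ be in the disc algebra and φ(λ) = μ with λ, μ on the unit circle. Then μ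
belongs to the essential spectrum of φ(S*), where φ(S*) is the operator-norm limit
of Pₙ(S*) for polynomials Pₙ converging to φ uniformly on the closed disc. -/
theorem circle_value_in_essential_spectrum (φ : ℂ → ℂ)
    (hφc : ContinuousOn φ (Metric.closedBall (0 : ℂ) 1))
    (hφa : DifferentiableOn ℂ φ (Metric.ball (0 : ℂ) 1))
    (S : H2 →L[ℂ] H2) (hS : ∀ (x : H2) (n : ℕ), S x n = x (n + 1))
    (P : ℕ → Polynomial ℂ)
    (hP : TendstoUniformlyOn (fun n z => (P n).eval z) φ Filter.atTop
      (Metric.closedBall (0 : ℂ) 1))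
    (A : H2 →L[ℂ] H2)
    (hA : Filter.Tendsto (fun n => Polynomial.aeval S (P n)) Filter.atTop (nhds A))
    (l μ : ℂ) (hl : ‖l‖ = 1) (hμ : ‖μ‖ = 1) (hlμ : φ l = μ) :
    ¬ IsFredholm (A - μ • 1) :=
  circle_value_in_essential_spectrum_general φ hφc S hS P hP A hA l μ hl hlμ
end

section
/- If T is a hypercyclic bounded linear operator on a separable complex Hilbert space and x is a hypercyclic vector for T, then Tx is also a hypercyclic vector for T; consequently the set of hypercyclic vectors for T is dense. -/
/-!
The orbit of `T x` is the orbit of `x` with the point `x` removed. A space without isolated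
points keeps every dense set dense after one point is removed, so `T x`, and by induction
every `Tⁿ x`, is hypercyclic; the orbit of `x` therefore lies inside the set of hypercyclic
vectors, which is consequently dense.
-/

open Set Filter Topology

theorem range_iterate_sdiff_self_subset_range_iterate_apply {X : Type*} (f : X → X) (x : X) :
    range (fun n => f^[n] x) \ {x} ⊆ range (fun n => f^[n] (f x)) := by
  rintro _ ⟨⟨_ | n, rfl⟩, hne⟩
  · exact absurd rfl hne
  · exact ⟨n, (Function.iterate_succ_apply f n x).symm⟩

section Iterate

variable {X : Type*} [TopologicalSpace X] [T1Space X] [∀ x : X, NeBot (𝓝[≠] x)]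
  {f : X → X} {x : X}

theorem Dense.range_iterate_apply (hx : Dense (range fun n => f^[n] x)) :
    Dense (range fun n => f^[n] (f x)) :=
  (hx.sdiff_singleton x).mono (range_iterate_sdiff_self_subset_range_iterate_apply f x)

theorem Dense.range_iterate_iterate (hx : Dense (range fun n => f^[n] x)) (m : ℕ) :
    Dense (range fun n => f^[n] (f^[m] x)) := by
  induction m with
  | zero => exact hx
  | succ m ih => simpa only [Function.iterate_succ_apply'] using ih.range_iterate_apply

theorem Dense.dense_setOf_dense_range_iterate (hx : Dense (range fun n => f^[n] x)) :
    Dense {y | Dense (range fun n => f^[n] y)} :=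
  hx.mono <| range_subset_iff.2 hx.range_iterate_iterate

end Iterate

theorem hypercyclic_vectors_dense_general {H : Type*} [NormedAddCommGroup H]
    [InnerProductSpace ℂ H]
    (T : H →L[ℂ] H) (x : H)
    (hx : Dense (Set.range fun n : ℕ => (T ^ n) x)) :
    Dense (Set.range fun n : ℕ => (T ^ n) (T x)) ∧
    Dense {y : H | Dense (Set.range fun n : ℕ => (T ^ n) y)} := by
  simp only [FunLike.coe_pow_eq_iterate] at hx ⊢
  obtain _ | _ := subsingleton_or_nontrivial H
  · have hall : ∀ y : H, Dense (range fun n => (⇑T)^[n] y) := fun y => Subsingleton.elim x y ▸ hx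
    exact ⟨hall _, by simpa only [hall, ofPred_true] using dense_univ⟩
  · have := Module.punctured_nhds_neBot ℂ H
    exact ⟨hx.range_iterate_apply, hx.dense_setOf_dense_range_iterate⟩

/-- If x is a hypercyclic vector for a bounded operator T on a separable complex
Hilbert space, then Tx is also hypercyclic; consequently the set of hypercyclic
vectors for T is dense. -/
theorem hypercyclic_vectors_dense {H : Type*} [NormedAddCommGroup H]
    [InnerProductSpace ℂ H] [CompleteSpace H] [TopologicalSpace.SeparableSpace H]
    (T : H →L[ℂ] H) (x : H)
    (hx : Dense (Set.range fun n : ℕ => (T ^ n) x)) :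
    Dense (Set.range fun n : ℕ => (T ^ n) (T x)) ∧
    Dense {y : H | Dense (Set.range fun n : ℕ => (T ^ n) y)} :=
  hypercyclic_vectors_dense_general T x hx
end

section
/- (Godefroy–Shapiro criterion) Let T be a bounded linear operator on a separable complex Banach space X. If both the span of eigenvectors of T corresponding to eigenvalues of modulus less than 1 and the span of eigenvectors corresponding to eigenvalues of modulus greater than 1 are dense in X, then T is hypercyclic (indeed hereditarily hypercyclic with respect to the full sequence of natural numbers). -/
/-!
For `u` in the span of the eigenvectors with `|c| < 1` we have `Tⁿ u → 0`, and every `v` in the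
span of the eigenvectors with `|c| > 1` is `Tⁿ wₙ` with `wₙ → 0` (divide by `cⁿ`). Hence
`u + wₙ` is close to `u` while `Tⁿ (u + wₙ)` is close to `v`: for all nonempty open `U`, `V` and
all large `n`, `Tⁿ` maps a point of `U` into `V`. Along any subsequence `n_k`, Baire's theorem
applied to the countably many sets `⋃ₖ (T^{n_k})⁻¹ V`, `V` in a countable basis, produces a
vector with dense orbit.
-/

open Filter Topology TopologicalSpace Set

/-- Birkhoff's transitivity theorem, for a family of maps in place of the iterates of one map. -/
theorem dense_setOf_denseRange_of_transitive {ι X Y : Type*} [TopologicalSpace X] [BaireSpace X]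
    [TopologicalSpace Y] [SecondCountableTopology Y] {f : ι → X → Y} (hf : ∀ i, Continuous (f i))
    (htrans : ∀ U V, IsOpen U → IsOpen V → U.Nonempty → V.Nonempty →
      ∃ i, (U ∩ f i ⁻¹' V).Nonempty) :
    Dense {x | DenseRange fun i => f i x} := by
  have hB := isBasis_countableBasis Y
  refine (dense_biInter_of_isOpen (S := {V ∈ countableBasis Y | V.Nonempty})
    (f := fun V => ⋃ i, f i ⁻¹' V) ?_ ?_ ?_).mono ?_
  · exact fun V hV => isOpen_iUnion fun i => (hB.isOpen hV.1).preimage (hf i)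
  · exact (countable_countableBasis Y).mono (sep_subset _ _)
  · refine fun V hV => dense_iff_inter_open.2 fun U hU hUne => ?_
    obtain ⟨i, x, hxU, hxV⟩ := htrans U V hU (hB.isOpen hV.1) hUne hV.2
    exact ⟨x, hxU, mem_iUnion.2 ⟨i, hxV⟩⟩
  · refine fun x hx => hB.dense_iff.2 fun V hV hVne => ?_
    obtain ⟨i, hi⟩ := mem_iUnion.1 (mem_iInter₂.1 hx V ⟨hV, hVne⟩)
    exact ⟨f i x, hi, i, rfl⟩

namespace ContinuousLinearMap

section Semiring

variable {R X : Type*} [Semiring R] [TopologicalSpace X] [AddCommMonoid X] [Module R X]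
  (T : X →L[R] X)

theorem pow_apply_of_apply_eq_smul {x : X} {c : R} (h : T x = c • x) (n : ℕ) :
    (T ^ n) x = c ^ n • x := by
  induction n with
  | zero => simp
  | succ n ih => rw [pow_succ, mul_apply_eq_comp, h, map_smul, ih, smul_smul, pow_succ']

/-- A form of Kitai's criterion for `T` to be topologically mixing. -/
theorem eventually_nonempty_inter_preimage_pow [ContinuousAdd X] {D₁ D₂ : Set X}
    (hD₁ : Dense D₁) (hD₂ : Dense D₂)
    (h₁ : ∀ u ∈ D₁, Tendsto (fun n : ℕ => (T ^ n) u) atTop (𝓝 0))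
    (h₂ : ∀ v ∈ D₂, ∃ w : ℕ → X, (∀ n, (T ^ n) (w n) = v) ∧ Tendsto w atTop (𝓝 0))
    {U V : Set X} (hU : IsOpen U) (hV : IsOpen V) (hUne : U.Nonempty) (hVne : V.Nonempty) :
    ∀ᶠ n : ℕ in atTop, (U ∩ (T ^ n) ⁻¹' V).Nonempty := by
  obtain ⟨u, hu, huU⟩ := hD₁.exists_mem_open hU hUne
  obtain ⟨v, hv, hvV⟩ := hD₂.exists_mem_open hV hVne
  obtain ⟨w, hTw, hw⟩ := h₂ v hv
  have hx : Tendsto (fun n : ℕ => u + w n) atTop (𝓝 u) := by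
    simpa using tendsto_const_nhds.add hw
  have hTx : Tendsto (fun n : ℕ => (T ^ n) (u + w n)) atTop (𝓝 v) := by
    simpa only [map_add, hTw, zero_add] using (h₁ u hu).add_const v
  filter_upwards [hx.eventually (hU.mem_nhds huU), hTx.eventually (hV.mem_nhds hvV)]
    with n hxU hTxV
  exact ⟨u + w n, hxU, hTxV⟩

end Semiring

section NormedField

variable {𝕜 X : Type*} [NormedField 𝕜] [TopologicalSpace X] [AddCommMonoid X] [Module 𝕜 X]
  [ContinuousAdd X] [ContinuousSMul 𝕜 X] (T : X →L[𝕜] X)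

theorem tendsto_pow_apply_zero_of_mem_span {S : Set X}
    (hS : ∀ x ∈ S, ∃ c : 𝕜, ‖c‖ < 1 ∧ T x = c • x) {u : X} (hu : u ∈ Submodule.span 𝕜 S) :
    Tendsto (fun n : ℕ => (T ^ n) u) atTop (𝓝 0) := by
  induction hu using Submodule.span_induction with
  | mem x hx =>
    obtain ⟨c, hc, hTx⟩ := hS x hx
    simpa [pow_apply_of_apply_eq_smul T hTx] using
      (tendsto_pow_atTop_nhds_zero_of_norm_lt_one hc).smul_const x
  | zero => simpa using tendsto_const_nhds
  | add x y _ _ hx hy => simpa using hx.add hy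
  | smul a x _ hx => simpa using hx.const_smul a

theorem exists_pow_apply_eq_tendsto_zero_of_mem_span {S : Set X}
    (hS : ∀ x ∈ S, ∃ c : 𝕜, 1 < ‖c‖ ∧ T x = c • x) {v : X} (hv : v ∈ Submodule.span 𝕜 S) :
    ∃ w : ℕ → X, (∀ n, (T ^ n) (w n) = v) ∧ Tendsto w atTop (𝓝 0) := by
  induction hv using Submodule.span_induction with
  | mem x hx =>
    obtain ⟨c, hc, hTx⟩ := hS x hx
    have hc₀ : c ≠ 0 := norm_pos_iff.1 (one_pos.trans hc)
    refine ⟨fun n => c⁻¹ ^ n • x, fun n => ?_, ?_⟩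
    · rw [map_smul, pow_apply_of_apply_eq_smul T hTx, inv_pow,
        inv_smul_smul₀ (pow_ne_zero n hc₀)]
    · have hc' : ‖c⁻¹‖ < 1 := by rw [norm_inv]; exact inv_lt_one_of_one_lt₀ hc
      simpa using (tendsto_pow_atTop_nhds_zero_of_norm_lt_one hc').smul_const x
  | zero => exact ⟨fun _ => 0, by simp, tendsto_const_nhds⟩
  | add x y _ _ hx hy =>
    obtain ⟨w₁, hTw₁, hw₁⟩ := hx
    obtain ⟨w₂, hTw₂, hw₂⟩ := hy
    exact ⟨fun n => w₁ n + w₂ n, fun n => by rw [map_add, hTw₁, hTw₂],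
      by simpa using hw₁.add hw₂⟩
  | smul a x _ hx =>
    obtain ⟨w, hTw, hw⟩ := hx
    exact ⟨fun n => a • w n, fun n => by rw [map_smul, hTw], by simpa using hw.const_smul a⟩

end NormedField

end ContinuousLinearMap

/-- Godefroy–Shapiro criterion: if the spans of eigenvectors of T with eigenvalues
of modulus < 1 and of modulus > 1 are both dense in a separable complex Banach
space, then T is hypercyclic, indeed hereditarily hypercyclic with respect to the
full sequence of natural numbers. -/
theorem godefroy_shapiro_criterion {X : Type*} [NormedAddCommGroup X]
    [NormedSpace ℂ X] [CompleteSpace X] [TopologicalSpace.SeparableSpace X]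
    (T : X →L[ℂ] X)
    (h1 : Dense (Submodule.span ℂ
      {x : X | x ≠ 0 ∧ ∃ c : ℂ, ‖c‖ < 1 ∧ T x = c • x} : Set X))
    (h2 : Dense (Submodule.span ℂ
      {x : X | x ≠ 0 ∧ ∃ c : ℂ, 1 < ‖c‖ ∧ T x = c • x} : Set X)) :
    (∃ x : X, Dense (Set.range fun n : ℕ => (T ^ n) x)) ∧
    (∀ k : ℕ → ℕ, StrictMono k →
      ∃ x : X, Dense (Set.range fun i : ℕ => (T ^ k i) x)) := by
  have mixing : ∀ U V : Set X, IsOpen U → IsOpen V → U.Nonempty → V.Nonempty →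
      ∀ᶠ n : ℕ in atTop, (U ∩ (T ^ n) ⁻¹' V).Nonempty := fun U V hU hV hUne hVne =>
    T.eventually_nonempty_inter_preimage_pow h1 h2
      (fun _ hu => T.tendsto_pow_apply_zero_of_mem_span (fun _ hx => hx.2) hu)
      (fun _ hv => T.exists_pow_apply_eq_tendsto_zero_of_mem_span (fun _ hx => hx.2) hv)
      hU hV hUne hVne
  have hereditary : ∀ k : ℕ → ℕ, StrictMono k →
      ∃ x : X, Dense (Set.range fun i : ℕ => (T ^ k i) x) := fun k hk =>
    (dense_setOf_denseRange_of_transitive (fun i => (T ^ k i).continuous)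
      fun U V hU hV hUne hVne =>
        (hk.tendsto_atTop.eventually (mixing U V hU hV hUne hVne)).exists).nonempty
  exact ⟨hereditary id strictMono_id, hereditary⟩
end

section
/- For λ ∈ ℂ with |λ| > 1, the operator λS* on ℓ²(ℕ) is hypercyclic (Rolewicz's theorem). -/
open Set Filter Topology TopologicalSpace Finset
open scoped ENNReal

theorem dense_setOf_dense_orbit {X : Type*} [TopologicalSpace X] [BaireSpace X]
    [SecondCountableTopology X] {f : X → X} (hf : Continuous f)
    (htrans : ∀ U V : Set X, IsOpen U → U.Nonempty → IsOpen V → V.Nonempty →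
      ∃ n, (U ∩ f^[n] ⁻¹' V).Nonempty) :
    Dense {x | Dense (range fun n => f^[n] x)} := by
  have hG : Dense (⋂ V ∈ countableBasis X, ⋃ n, f^[n] ⁻¹' V) := by
    refine dense_biInter_of_isOpen (fun V hV => isOpen_iUnion fun n =>
      (isOpen_of_mem_countableBasis hV).preimage (hf.iterate n)) (countable_countableBasis X)
      fun V hV => dense_iff_inter_open.2 fun U hU hUne => ?_
    obtain ⟨n, x, hxU, hxV⟩ := htrans U V hU hUne (isOpen_of_mem_countableBasis hV)
      (nonempty_of_mem_countableBasis hV)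
    exact ⟨x, hxU, mem_iUnion.2 ⟨n, hxV⟩⟩
  refine hG.mono fun x hx => (isBasis_countableBasis X).dense_iff.2 fun V hV _ => ?_
  obtain ⟨n, hn⟩ := mem_iUnion.1 (mem_iInter₂.1 hx V hV)
  exact ⟨_, hn, n, rfl⟩

section BackwardShift

variable {𝕜 : Type*} [NormedField 𝕜] {p : ℝ≥0∞}

noncomputable def truncShift (p : ℝ≥0∞) (n m : ℕ) (x : ℕ → 𝕜) : lp (fun _ : ℕ => 𝕜) p :=
  ∑ i ∈ range m, lp.single p (n + i) (x i)

theorem truncShift_apply (n m : ℕ) (x : ℕ → 𝕜) (q : ℕ) :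
    truncShift p n m x q = ∑ i ∈ range m, if q = n + i then x i else 0 := by
  simp only [truncShift, lp.coeFn_sum, Finset.sum_apply, lp.single_apply, Pi.single_apply]

theorem truncShift_add_apply_add (N n m : ℕ) (x : ℕ → 𝕜) (q : ℕ) :
    truncShift p (N + n) m x (q + N) = truncShift p n m x q := by
  simp only [truncShift_apply]
  exact Finset.sum_congr rfl fun i _ => by
    simp only [show N + n + i = n + i + N by ring, add_left_inj]

theorem truncShift_apply_of_le {n m q : ℕ} (h : n + m ≤ q) (x : ℕ → 𝕜) :
    truncShift p n m x q = 0 := by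
  rw [truncShift_apply]
  exact Finset.sum_eq_zero fun i hi => if_neg (by have := Finset.mem_range.1 hi; omega)

variable [Fact (1 ≤ p)]

theorem norm_truncShift_le (n m : ℕ) (x : ℕ → 𝕜) :
    ‖truncShift p n m x‖ ≤ ∑ i ∈ range m, ‖x i‖ :=
  (norm_sum_le _ _).trans_eq <| Finset.sum_congr rfl fun _ _ =>
    lp.norm_single (zero_lt_one.trans_le Fact.out) _ _

theorem tendsto_truncShift_zero (hp : p ≠ ⊤) (x : lp (fun _ : ℕ => 𝕜) p) :
    Tendsto (fun m => truncShift p 0 m x) atTop (𝓝 x) := by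
  simpa only [truncShift, zero_add] using (lp.hasSum_single hp x).tendsto_sum_nat

theorem separableSpace_lp (hp : p ≠ ⊤) [SeparableSpace 𝕜] :
    SeparableSpace (lp (fun _ : ℕ => 𝕜) p) := by
  have hdense : Dense (Submodule.span 𝕜 (range fun i => lp.single (E := fun _ : ℕ => 𝕜) p i 1) :
      Set (lp (fun _ : ℕ => 𝕜) p)) := fun x =>
    mem_closure_of_tendsto (tendsto_truncShift_zero hp x) <| Eventually.of_forall fun m => by
      refine Submodule.sum_mem _ fun i _ => ?_
      rw [zero_add, ← mul_one (x i), ← smul_eq_mul, lp.single_smul]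
      exact Submodule.smul_mem _ _ (Submodule.subset_span ⟨i, rfl⟩)
  refine isSeparable_univ_iff.mp ?_
  rw [← hdense.closure_eq]
  exact (countable_range _).isSeparable.span.closure

theorem tendsto_inv_pow_smul_truncShift {l : 𝕜} (hl : 1 < ‖l‖) (m : ℕ) (x : ℕ → 𝕜) :
    Tendsto (fun n => (l ^ n)⁻¹ • truncShift p n m x) atTop (𝓝 0) := by
  refine squeeze_zero_norm (fun n => ?_) (by simpa using (tendsto_pow_atTop_nhds_zero_of_lt_one
    (inv_nonneg.2 (norm_nonneg l)) (inv_lt_one_of_one_lt₀ hl)).mul_const (∑ i ∈ range m, ‖x i‖))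
  rw [norm_smul, norm_inv, norm_pow]
  exact mul_le_mul_of_nonneg_left (norm_truncShift_le n m x) (by positivity)

variable {l : 𝕜} {S : lp (fun _ : ℕ => 𝕜) p →L[𝕜] lp (fun _ : ℕ => 𝕜) p}

theorem smul_shift_pow_apply
    (hS : ∀ (x : lp (fun _ : ℕ => 𝕜) p) (n : ℕ), S x n = x (n + 1)) (N : ℕ)
    (x : lp (fun _ : ℕ => 𝕜) p) (q : ℕ) :
    ((l • S) ^ N) x q = l ^ N * x (q + N) := by
  induction N generalizing x with
  | zero => simp
  | succ N ih =>
    rw [pow_succ, mul_apply_eq_comp, ih, smul_apply,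
      lp.coeFn_smul, Pi.smul_apply, hS, smul_eq_mul, pow_succ, ← add_assoc]
    ring

theorem smul_shift_pow_truncShift_self
    (hS : ∀ (x : lp (fun _ : ℕ => 𝕜) p) (n : ℕ), S x n = x (n + 1)) (N m : ℕ) (x : ℕ → 𝕜) :
    ((l • S) ^ N) (truncShift p N m x) = l ^ N • truncShift p 0 m x := by
  ext q
  rw [smul_shift_pow_apply hS, lp.coeFn_smul, Pi.smul_apply, smul_eq_mul,
    ← truncShift_add_apply_add N 0 m x q, add_zero]

theorem smul_shift_pow_truncShift_zero
    (hS : ∀ (x : lp (fun _ : ℕ => 𝕜) p) (n : ℕ), S x n = x (n + 1)) {N m : ℕ} (h : m ≤ N)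
    (x : ℕ → 𝕜) :
    ((l • S) ^ N) (truncShift p 0 m x) = 0 := by
  ext q
  rw [smul_shift_pow_apply hS, truncShift_apply_of_le (by omega), mul_zero, lp.coeFn_zero,
    Pi.zero_apply]

theorem exists_iterate_smul_shift_mem
    (hS : ∀ (x : lp (fun _ : ℕ => 𝕜) p) (n : ℕ), S x n = x (n + 1)) (hp : p ≠ ⊤) (hl : 1 < ‖l‖)
    {U V : Set (lp (fun _ : ℕ => 𝕜) p)} (hU : IsOpen U) (hUne : U.Nonempty) (hV : IsOpen V)
    (hVne : V.Nonempty) : ∃ n, (U ∩ (⇑(l • S))^[n] ⁻¹' V).Nonempty := by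
  obtain ⟨x, hxU⟩ := hUne
  obtain ⟨y, hyV⟩ := hVne
  obtain ⟨m, hmU, hmV⟩ : ∃ m, truncShift p 0 m x ∈ U ∧ truncShift p 0 m y ∈ V :=
    (((tendsto_truncShift_zero hp x).eventually (hU.mem_nhds hxU)).and
      ((tendsto_truncShift_zero hp y).eventually (hV.mem_nhds hyV))).exists
  set z : ℕ → lp (fun _ : ℕ => 𝕜) p := fun n =>
    truncShift p 0 m x + (l ^ n)⁻¹ • truncShift p n m y
  have hz : Tendsto z atTop (𝓝 (truncShift p 0 m x)) := by
    simpa using tendsto_const_nhds.add (tendsto_inv_pow_smul_truncShift (p := p) hl m y)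
  obtain ⟨n, hnU, hmn⟩ := ((hz.eventually (hU.mem_nhds hmU)).and (eventually_ge_atTop m)).exists
  have hl0 : l ≠ 0 := norm_pos_iff.1 (one_pos.trans hl)
  refine ⟨n, z n, hnU, ?_⟩
  rw [Set.mem_preimage, ← FunLike.coe_pow_eq_iterate, map_add, map_smul,
    smul_shift_pow_truncShift_zero hS hmn, smul_shift_pow_truncShift_self hS, smul_smul,
    inv_mul_cancel₀ (pow_ne_zero _ hl0), one_smul, zero_add]
  exact hmV

end BackwardShift

/-- Rolewicz's theorem: for |λ| > 1 the operator λS* on ℓ²(ℕ) is hypercyclic. -/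
theorem rolewicz_hypercyclic (l : ℂ) (hl : 1 < ‖l‖)
    (S : H2 →L[ℂ] H2) (hS : ∀ (x : H2) (n : ℕ), S x n = x (n + 1)) :
    ∃ x : H2, Dense (Set.range fun n : ℕ => ((l • S) ^ n) x) := by
  have hp : (2 : ℝ≥0∞) ≠ ⊤ := ENNReal.ofNat_ne_top
  have := separableSpace_lp (𝕜 := ℂ) hp
  obtain ⟨x, hx⟩ := (dense_setOf_dense_orbit (l • S).continuous fun _ _ hU hUne hV hVne =>
    exists_iterate_smul_shift_mem hS hp hl hU hUne hV hVne).nonempty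
  exact ⟨x, by simpa only [FunLike.coe_pow_eq_iterate, mem_ofPred_eq] using hx⟩
end
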